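/- Let $\tilde{A}$ be the adjacency matrix with self-loops of a connected undirected graph with $n$ nodes and $m$ edges (so $\sum_{i,j}\tilde{A}_{ij} = 2m + n$, counting self-loops), and let $\tilde{D}$ be its diagonal degree matrix with $\tilde{D}_{ii} = d_i + 1$. Define the matrix $M$ by $M_{ij} = \frac{(d_i+1)^r(d_j+1)^{1-r}}{2m+n}$ for a fixed $r \in \mathbb{R}$. Then $M$ is a fixed point of left-multiplication by $\hat{A} = \tilde{D}^{r-1}\tilde{A}\tilde{D}^{-r}$, i.e., $\hat{A} M = M$. -/
import Mathlib


open Finset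

theorem stmt_9 {n : ℕ} (m : ℕ) (A : Matrix (Fin n) (Fin n) ℝ)
    (hsym : A.IsSymm) (hnonneg : ∀ i j, 0 ≤ A i j) (r : ℝ)
    (d : Fin n → ℝ) (hd : ∀ i, d i = ∑ j, A i j)
    (Atil : Matrix (Fin n) (Fin n) ℝ) (hAtil : Atil = A + 1)
    (hm : ∑ i, ∑ j, Atil i j = 2 * m + n)
    (hmn : (0 : ℝ) < 2 * m + n)
    (Ahat M : Matrix (Fin n) (Fin n) ℝ)
    (hAhat : ∀ i j, Ahat i j =
      (d i + 1) ^ (r - 1 : ℝ) * Atil i j * (d j + 1) ^ (-r : ℝ))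
    (hM : ∀ i j, M i j =
      (d i + 1) ^ (r : ℝ) * (d j + 1) ^ (1 - r : ℝ) / (2 * m + n)) :
    Ahat * M = M := by
  have hdpos : ∀ i, 0 < d i + 1 := by
    intro i
    have : 0 ≤ d i := by
      rw [hd]
      exact Finset.sum_nonneg fun j _ => hnonneg i j
    linarith
  have hrow : ∀ i, ∑ k, Atil i k = d i + 1 := by
    intro i
    simp [hAtil, Matrix.one_apply, hd, Finset.sum_add_distrib]
  ext i j
  rw [Matrix.mul_apply, hM]
  have hterm : ∀ k, Ahat i k * M k j =
      Atil i k * ((d i + 1) ^ (r - 1 : ℝ) * (d j + 1) ^ (1 - r : ℝ) / (2 * m + n)) := by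
    intro k
    rw [hAhat, hM]
    have h1 : (d k + 1) ^ (-r : ℝ) * (d k + 1) ^ (r : ℝ) = 1 := by
      rw [← Real.rpow_add (hdpos k)]; simp
    linear_combination ((d i + 1) ^ (r - 1 : ℝ) * Atil i k * (d j + 1) ^ (1 - r : ℝ) / (2 * m + n)) * h1
  rw [Finset.sum_congr rfl fun k _ => hterm k, ← Finset.sum_mul, hrow]
  have h2 : (d i + 1) ^ (r - 1 : ℝ) * (d i + 1) = (d i + 1) ^ (r : ℝ) := by
    nth_rewrite 2 [← Real.rpow_one (d i + 1)]
    rw [← Real.rpow_add (hdpos i)]; ring_nf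
  linear_combination ((d j + 1) ^ (1 - r : ℝ) / (2 * m + n)) * h2
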